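/- arXiv:1405.1343 — 4 statements merged into one kernel-verified Lean document; each statement's English description precedes it below -/
import Mathlib

section
/- Let H and V be Hilbert spaces, a a symmetric continuous coercive bilinear form on H, c a symmetric continuous coercive bilinear form on V, and b a continuous bilinear form on H × V, all with continuity/coercivity constants bounded by C and C⁻¹ respectively. Define the semi-norm |q|_V̄ = sup_{v∈H, v≠0} b(v,q)/‖v‖_H. Then there exists a constant C₂ depending only on C such that for all u ∈ H, p ∈ V and all ε > 0: sup_{(v,q)∈H×V, (v,q)≠0} (a(u,v)+b(v,p)-b(u,q)+ε²c(p,q))/(‖v‖_H + |q|_V̄ + ε‖q‖_V) ≤ C₂(‖u‖_H + |p|_V̄ + ε‖p‖_V). -/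
/-- The weak (semi) norm `|q|_V̄ = sup_{v ≠ 0} b(v,q)/‖v‖_H`. -/
noncomputable def weakSemiNorm {H V : Type*} [NormedAddCommGroup H] [InnerProductSpace ℝ H]
    [NormedAddCommGroup V] [InnerProductSpace ℝ V]
    (b : H →ₗ[ℝ] V →ₗ[ℝ] ℝ) (q : V) : ℝ :=
  ⨆ v : {v : H // v ≠ 0}, b v q / ‖(v : H)‖

section aux

variable {H V : Type*} [NormedAddCommGroup H] [InnerProductSpace ℝ H]
    [NormedAddCommGroup V] [InnerProductSpace ℝ V]
    (b : H →ₗ[ℝ] V →ₗ[ℝ] ℝ) {C : ℝ}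

lemma wsn_bdd (hb : ∀ (v : H) (q : V), |b v q| ≤ C * ‖v‖ * ‖q‖) (q : V) :
    BddAbove (Set.range fun v : {v : H // v ≠ 0} => b v q / ‖(v : H)‖) := by
  refine ⟨C * ‖q‖, ?_⟩
  rintro x ⟨⟨v, hv⟩, rfl⟩
  have hv' : (0:ℝ) < ‖v‖ := norm_pos_iff.mpr hv
  rw [div_le_iff₀ hv']
  calc b v q ≤ |b v q| := le_abs_self _
    _ ≤ C * ‖v‖ * ‖q‖ := hb v q
    _ = C * ‖q‖ * ‖v‖ := by ring

lemma wsn_nonneg (hb : ∀ (v : H) (q : V), |b v q| ≤ C * ‖v‖ * ‖q‖) (q : V) :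
    0 ≤ weakSemiNorm b q := by
  by_cases h : ∃ v : H, v ≠ 0
  · obtain ⟨v, hv⟩ := h
    have h1 := le_ciSup (wsn_bdd b hb q) ⟨v, hv⟩
    have h2 := le_ciSup (wsn_bdd b hb q) ⟨-v, neg_ne_zero.mpr hv⟩
    simp only [map_neg, LinearMap.neg_apply, norm_neg] at h2
    have hv' : (0:ℝ) < ‖v‖ := norm_pos_iff.mpr hv
    unfold weakSemiNorm
    have : -(b v q) / ‖v‖ = -(b v q / ‖v‖) := by ring
    rw [this] at h2
    linarith
  · have he : IsEmpty {v : H // v ≠ 0} :=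
      ⟨fun ⟨v, hv⟩ => hv (by push_neg at h; exact h v)⟩
    rw [weakSemiNorm, Real.iSup_of_isEmpty]

lemma wsn_bound (hb : ∀ (v : H) (q : V), |b v q| ≤ C * ‖v‖ * ‖q‖) (v : H) (q : V) :
    b v q ≤ weakSemiNorm b q * ‖v‖ := by
  rcases eq_or_ne v 0 with rfl | hv
  · simp
  · have h1 := le_ciSup (wsn_bdd b hb q) ⟨v, hv⟩
    have hv' : (0:ℝ) < ‖v‖ := norm_pos_iff.mpr hv
    rw [div_le_iff₀ hv'] at h1
    exact h1

end aux

/-- Second inequality of Theorem 2.2: the sup of the mixed quotient is bounded by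
`C₂ (‖u‖_H + |p|_V̄ + ε‖p‖_V)`, with `C₂` depending only on the continuity/coercivity
constant `C`. -/
theorem mixed_sup_upper_bound (C : ℝ) (hC : 0 < C) :
    ∃ C₂ : ℝ, 0 < C₂ ∧
      ∀ (H V : Type) [NormedAddCommGroup H] [InnerProductSpace ℝ H] [CompleteSpace H]
        [NormedAddCommGroup V] [InnerProductSpace ℝ V] [CompleteSpace V]
        (a : H →ₗ[ℝ] H →ₗ[ℝ] ℝ) (c : V →ₗ[ℝ] V →ₗ[ℝ] ℝ) (b : H →ₗ[ℝ] V →ₗ[ℝ] ℝ),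
        (∀ u v : H, a u v = a v u) →
        (∀ u v : H, |a u v| ≤ C * ‖u‖ * ‖v‖) →
        (∀ u : H, C⁻¹ * ‖u‖ ^ 2 ≤ a u u) →
        (∀ p q : V, c p q = c q p) →
        (∀ p q : V, |c p q| ≤ C * ‖p‖ * ‖q‖) →
        (∀ p : V, C⁻¹ * ‖p‖ ^ 2 ≤ c p p) →
        (∀ (v : H) (q : V), |b v q| ≤ C * ‖v‖ * ‖q‖) →
        ∀ (u : H) (p : V) (ε : ℝ), 0 < ε →
          (⨆ vq : {vq : H × V // vq ≠ 0},
              (a u (vq : H × V).1 + b (vq : H × V).1 p - b u (vq : H × V).2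
                  + ε ^ 2 * c p (vq : H × V).2) /
                (‖(vq : H × V).1‖ + weakSemiNorm b (vq : H × V).2 + ε * ‖(vq : H × V).2‖))
            ≤ C₂ * (‖u‖ + weakSemiNorm b p + ε * ‖p‖) := by
  refine ⟨C + 1, by linarith, ?_⟩
  intro H V _ _ _ _ _ _ a c b ha hA hcoa hc hc2 hcoc hb u p ε hε
  set Wp := weakSemiNorm b p with hWp
  have hWp0 : 0 ≤ Wp := wsn_nonneg b hb p
  have hM : 0 ≤ ‖u‖ + Wp + ε * ‖p‖ := by
    have := norm_nonneg u
    have := mul_nonneg hε.le (norm_nonneg p)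
    linarith
  apply Real.iSup_le
  · rintro ⟨⟨v, q⟩, hvq⟩
    simp only
    set Wq := weakSemiNorm b q with hWq
    have hWq0 : 0 ≤ Wq := wsn_nonneg b hb q
    have hD : 0 < ‖v‖ + Wq + ε * ‖q‖ := by
      have hor : v ≠ 0 ∨ q ≠ 0 := by
        by_contra hcon
        push_neg at hcon
        exact hvq (by simp [Prod.ext_iff, hcon.1, hcon.2])
      rcases hor with hv | hq
      · have : (0:ℝ) < ‖v‖ := norm_pos_iff.mpr hv
        have := mul_nonneg hε.le (norm_nonneg q)
        linarith
      · have : (0:ℝ) < ‖q‖ := norm_pos_iff.mpr hq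
        have : (0:ℝ) < ε * ‖q‖ := mul_pos hε this
        have := norm_nonneg v
        linarith
    rw [div_le_iff₀ hD]
    have h1 : a u v ≤ C * ‖u‖ * ‖v‖ := le_trans (le_abs_self _) (hA u v)
    have h2 : b v p ≤ Wp * ‖v‖ := wsn_bound b hb v p
    have h3 : -(b u q) ≤ Wq * ‖u‖ := by
      have := wsn_bound b hb (-u) q
      simpa [norm_neg] using this
    have h4 : ε ^ 2 * c p q ≤ ε ^ 2 * (C * ‖p‖ * ‖q‖) :=
      mul_le_mul_of_nonneg_left (le_trans (le_abs_self _) (hc2 p q)) (sq_nonneg ε)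
    -- piecewise bounds
    have hMv : ‖u‖ ≤ ‖u‖ + Wp + ε * ‖p‖ := by
      have := mul_nonneg hε.le (norm_nonneg p); linarith
    have t1 : C * ‖u‖ * ‖v‖ ≤ C * (‖u‖ + Wp + ε * ‖p‖) * ‖v‖ := by
      have : C * ‖u‖ ≤ C * (‖u‖ + Wp + ε * ‖p‖) :=
        mul_le_mul_of_nonneg_left hMv hC.le
      exact mul_le_mul_of_nonneg_right this (norm_nonneg v)
    have t2 : Wp * ‖v‖ ≤ (‖u‖ + Wp + ε * ‖p‖) * ‖v‖ := by
      have : Wp ≤ ‖u‖ + Wp + ε * ‖p‖ := by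
        have := mul_nonneg hε.le (norm_nonneg p); have := norm_nonneg u; linarith
      exact mul_le_mul_of_nonneg_right this (norm_nonneg v)
    have t3 : Wq * ‖u‖ ≤ Wq * (‖u‖ + Wp + ε * ‖p‖) :=
      mul_le_mul_of_nonneg_left hMv hWq0
    have t4 : ε ^ 2 * (C * ‖p‖ * ‖q‖) ≤ C * (‖u‖ + Wp + ε * ‖p‖) * (ε * ‖q‖) := by
      have h5 : ε * ‖p‖ ≤ ‖u‖ + Wp + ε * ‖p‖ := by
        have := norm_nonneg u; linarith
      have := mul_le_mul_of_nonneg_right h5 (mul_nonneg hε.le (norm_nonneg q))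
      calc ε ^ 2 * (C * ‖p‖ * ‖q‖) = C * ((ε * ‖p‖) * (ε * ‖q‖)) := by ring
        _ ≤ C * ((‖u‖ + Wp + ε * ‖p‖) * (ε * ‖q‖)) :=
            mul_le_mul_of_nonneg_left this hC.le
        _ = C * (‖u‖ + Wp + ε * ‖p‖) * (ε * ‖q‖) := by ring
    nlinarith [t1, t2, t3, t4, h1, h2, h3, h4, hM, hD.le, norm_nonneg v, hWq0,
      mul_nonneg hε.le (norm_nonneg q), mul_nonneg hM (norm_nonneg v),
      mul_nonneg hM hWq0, mul_nonneg hM (mul_nonneg hε.le (norm_nonneg q))]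
  · exact mul_nonneg (by linarith) hM
end

section
/- Let H, V be Hilbert spaces with bilinear forms a, b, c as in the abstract mixed problem (a symmetric continuous coercive on H, c symmetric continuous coercive on V, b continuous). For every f ∈ H* and g ∈ V* and every ε > 0, the mixed problem a(u,v)+b(v,p) = f(v) for all v ∈ H, b(u,q) - ε²c(p,q) = g(q) for all q ∈ V, has a unique solution (u,p) ∈ H × V. -/
open InnerProductSpace RealInnerProductSpace

section Aux

variable {H V : Type*} [NormedAddCommGroup H] [InnerProductSpace ℝ H] [CompleteSpace H]
    [NormedAddCommGroup V] [InnerProductSpace ℝ V] [CompleteSpace V]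

/-- The big bilinear form on the product space (as a plain product). -/
noncomputable def mixedBilin (a : H →ₗ[ℝ] H →ₗ[ℝ] ℝ) (c : V →ₗ[ℝ] V →ₗ[ℝ] ℝ)
    (b : H →ₗ[ℝ] V →ₗ[ℝ] ℝ) (ε : ℝ) : (H × V) →ₗ[ℝ] (H × V) →ₗ[ℝ] ℝ :=
  LinearMap.mk₂ ℝ
    (fun w w' => a w.1 w'.1 + b w'.1 w.2 - b w.1 w'.2 + ε ^ 2 * c w.2 w'.2)
    (by intro m m' n; simp [map_add, LinearMap.add_apply]; ring)
    (by intro s m n; simp [map_smul, LinearMap.smul_apply, smul_eq_mul]; ring)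
    (by intro m n n'; simp [map_add, LinearMap.add_apply]; ring)
    (by intro s m n; simp [map_smul, LinearMap.smul_apply, smul_eq_mul]; ring)

end Aux

/-- Well-posedness of the abstract mixed problem (2.15): with `a` symmetric continuous
coercive on `H`, `c` symmetric continuous coercive on `V`, `b` continuous on `H × V`,
for every `f ∈ H*`, `g ∈ V*` and every `ε > 0` the mixed system
`a(u,v)+b(v,p) = f(v)` for all `v`, `b(u,q) - ε²c(p,q) = g(q)` for all `q`,
has a unique solution `(u,p) ∈ H × V`. -/
theorem mixed_problem_well_posed
    {H V : Type*} [NormedAddCommGroup H] [InnerProductSpace ℝ H] [CompleteSpace H]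
    [NormedAddCommGroup V] [InnerProductSpace ℝ V] [CompleteSpace V]
    (C : ℝ) (hC : 0 < C)
    (a : H →ₗ[ℝ] H →ₗ[ℝ] ℝ) (c : V →ₗ[ℝ] V →ₗ[ℝ] ℝ) (b : H →ₗ[ℝ] V →ₗ[ℝ] ℝ)
    (ha_symm : ∀ u v : H, a u v = a v u)
    (ha_cont : ∀ u v : H, |a u v| ≤ C * ‖u‖ * ‖v‖)
    (ha_coer : ∀ u : H, C⁻¹ * ‖u‖ ^ 2 ≤ a u u)
    (hc_symm : ∀ p q : V, c p q = c q p)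
    (hc_cont : ∀ p q : V, |c p q| ≤ C * ‖p‖ * ‖q‖)
    (hc_coer : ∀ p : V, C⁻¹ * ‖p‖ ^ 2 ≤ c p p)
    (hb_cont : ∀ (v : H) (q : V), |b v q| ≤ C * ‖v‖ * ‖q‖)
    (f : H →L[ℝ] ℝ) (g : V →L[ℝ] ℝ) (ε : ℝ) (hε : 0 < ε) :
    ∃! up : H × V,
      (∀ v : H, a up.1 v + b v up.2 = f v) ∧
      (∀ q : V, b up.1 q - ε ^ 2 * c up.2 q = g q) := by
  classical
  set W := WithLp 2 (H × V) with hW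
  let e : W ≃ₗ[ℝ] H × V := WithLp.linearEquiv 2 ℝ (H × V)
  let B₀ : W →ₗ[ℝ] W →ₗ[ℝ] ℝ :=
    (((mixedBilin a c b ε).comp e.toLinearMap).compl₂ e.toLinearMap)
  have hB₀ : ∀ w w' : W, B₀ w w' =
      a (e w).1 (e w').1 + b (e w').1 (e w).2 - b (e w).1 (e w').2
        + ε ^ 2 * c (e w).2 (e w').2 := fun w w' => rfl
  -- component norm bounds
  have hsq : ∀ w : W, ‖w‖ ^ 2 = ‖(e w).1‖ ^ 2 + ‖(e w).2‖ ^ 2 := by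
    intro w; exact WithLp.prod_norm_sq_eq_of_L2 w
  have hfst : ∀ w : W, ‖(e w).1‖ ≤ ‖w‖ := by
    intro w
    nlinarith [hsq w, norm_nonneg (e w).1, norm_nonneg w, sq_nonneg ‖(e w).2‖]
  have hsnd : ∀ w : W, ‖(e w).2‖ ≤ ‖w‖ := by
    intro w
    nlinarith [hsq w, norm_nonneg (e w).2, norm_nonneg w, sq_nonneg ‖(e w).1‖]
  -- continuity bound
  have hMnn : (0:ℝ) ≤ (3 + ε ^ 2) * C := by positivity
  have hbound : ∀ w w' : W, ‖B₀ w w'‖ ≤ (3 + ε ^ 2) * C * ‖w‖ * ‖w'‖ := by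
    intro w w'
    rw [hB₀, Real.norm_eq_abs]
    have h1 := ha_cont (e w).1 (e w').1
    have h2 := hb_cont (e w').1 (e w).2
    have h3 := hb_cont (e w).1 (e w').2
    have h4 := hc_cont (e w).2 (e w').2
    have e1 : C * ‖(e w).1‖ * ‖(e w').1‖ ≤ C * ‖w‖ * ‖w'‖ := by
      gcongr <;> [exact hfst w; exact hfst w']
    have e2 : C * ‖(e w').1‖ * ‖(e w).2‖ ≤ C * ‖w'‖ * ‖w‖ := by
      gcongr <;> [exact hfst w'; exact hsnd w]
    have e2' : C * ‖(e w').1‖ * ‖(e w).2‖ ≤ C * ‖w‖ * ‖w'‖ := by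
      rw [show C * ‖w‖ * ‖w'‖ = C * ‖w'‖ * ‖w‖ by ring]; exact e2
    have e3 : C * ‖(e w).1‖ * ‖(e w').2‖ ≤ C * ‖w‖ * ‖w'‖ := by
      gcongr <;> [exact hfst w; exact hsnd w']
    have e4 : C * ‖(e w).2‖ * ‖(e w').2‖ ≤ C * ‖w‖ * ‖w'‖ := by
      gcongr <;> [exact hsnd w; exact hsnd w']
    calc |a (e w).1 (e w').1 + b (e w').1 (e w).2 - b (e w).1 (e w').2
          + ε ^ 2 * c (e w).2 (e w').2|
        ≤ |a (e w).1 (e w').1| + |b (e w').1 (e w).2| + |b (e w).1 (e w').2|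
          + ε ^ 2 * |c (e w).2 (e w').2| := by
          have t1 := abs_add_le (a (e w).1 (e w').1 + b (e w').1 (e w).2 - b (e w).1 (e w').2)
            (ε ^ 2 * c (e w).2 (e w').2)
          have t2 := abs_sub (a (e w).1 (e w').1 + b (e w').1 (e w).2) (b (e w).1 (e w').2)
          have t3 := abs_add_le (a (e w).1 (e w').1) (b (e w').1 (e w).2)
          have t4 : |ε ^ 2 * c (e w).2 (e w').2| = ε ^ 2 * |c (e w).2 (e w').2| := by
            rw [abs_mul, abs_of_nonneg (sq_nonneg ε)]
          rw [t4] at t1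
          linarith
      _ ≤ C * ‖w‖ * ‖w'‖ + C * ‖w‖ * ‖w'‖ + C * ‖w‖ * ‖w'‖
          + ε ^ 2 * (C * ‖w‖ * ‖w'‖) := by
          have h4' : ε ^ 2 * |c (e w).2 (e w').2| ≤ ε ^ 2 * (C * ‖w‖ * ‖w'‖) := by
            apply mul_le_mul_of_nonneg_left _ (sq_nonneg ε)
            exact le_trans h4 e4
          linarith [le_trans h1 e1, le_trans h2 e2', le_trans h3 e3]
      _ = (3 + ε ^ 2) * C * ‖w‖ * ‖w'‖ := by ring
  let B : W →L[ℝ] W →L[ℝ] ℝ := LinearMap.mkContinuous₂ B₀ ((3 + ε ^ 2) * C) hbound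
  have hB : ∀ w w' : W, B w w' = B₀ w w' := fun _ _ => rfl
  -- coercivity
  have coer : IsCoercive B := by
    refine ⟨min C⁻¹ (ε ^ 2 * C⁻¹), lt_min (by positivity) (by positivity), ?_⟩
    intro w
    have h1 := ha_coer (e w).1
    have h2 := hc_coer (e w).2
    have hK1 : min C⁻¹ (ε ^ 2 * C⁻¹) ≤ C⁻¹ := min_le_left _ _
    have hK2 : min C⁻¹ (ε ^ 2 * C⁻¹) ≤ ε ^ 2 * C⁻¹ := min_le_right _ _
    have hBw : B w w = a (e w).1 (e w).1 - b (e w).1 (e w).2 + b (e w).1 (e w).2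
        + ε ^ 2 * c (e w).2 (e w).2 := by rw [hB, hB₀]; ring
    have : min C⁻¹ (ε ^ 2 * C⁻¹) * ‖w‖ * ‖w‖ ≤
        C⁻¹ * ‖(e w).1‖ ^ 2 + ε ^ 2 * (C⁻¹ * ‖(e w).2‖ ^ 2) := by
      have hw2 : ‖w‖ * ‖w‖ = ‖(e w).1‖ ^ 2 + ‖(e w).2‖ ^ 2 := by
        rw [← sq]; exact hsq w
      rw [mul_assoc, hw2]
      nlinarith [sq_nonneg ‖(e w).1‖, sq_nonneg ‖(e w).2‖, hK1, hK2,
        lt_min (inv_pos.mpr hC) (by positivity : (0:ℝ) < ε ^ 2 * C⁻¹)]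
    refine le_trans this ?_
    rw [hBw]
    have : ε ^ 2 * (C⁻¹ * ‖(e w).2‖ ^ 2) ≤ ε ^ 2 * c (e w).2 (e w).2 :=
      mul_le_mul_of_nonneg_left h2 (sq_nonneg ε)
    linarith
  -- right-hand side functional
  let F : W →L[ℝ] ℝ :=
    (f.comp (ContinuousLinearMap.fst ℝ H V) - g.comp (ContinuousLinearMap.snd ℝ H V)).comp
      (WithLp.prodContinuousLinearEquiv 2 ℝ H V : W →L[ℝ] H × V)
  have hF : ∀ w : W, F w = f (e w).1 - g (e w).2 := fun w => rfl
  -- solve B sol w = F w for all w, using Lax-Milgram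
  let y : W := (toDual ℝ W).symm F
  obtain ⟨sol, hsol⟩ := (coer.continuousLinearEquivOfBilin).surjective y
  have hkey : ∀ w : W, B sol w = F w := by
    intro w
    have := coer.continuousLinearEquivOfBilin_apply sol w
    rw [hsol] at this
    rw [← this]
    simp only [y, InnerProductSpace.toDual_symm_apply]
  -- translate back
  set u : H := (e sol).1
  set p : V := (e sol).2
  have hEq1 : ∀ v : H, a u v + b v p = f v := by
    intro v
    have := hkey (e.symm (v, 0))
    rw [hB, hB₀, hF] at this
    simp only [LinearEquiv.apply_symm_apply] at this
    simpa [u, p] using this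
  have hEq2 : ∀ q : V, b u q - ε ^ 2 * c p q = g q := by
    intro q
    have := hkey (e.symm (0, q))
    rw [hB, hB₀, hF] at this
    simp only [LinearEquiv.apply_symm_apply] at this
    simp only [map_zero, LinearMap.zero_apply, zero_add, add_zero, zero_sub,
      LinearMap.map_zero] at this
    simpa [u, p, sub_eq_iff_eq_add, neg_add_eq_sub] using by linarith [this]
  refine ⟨(u, p), ⟨hEq1, hEq2⟩, ?_⟩
  rintro ⟨u', p'⟩ ⟨h1', h2'⟩
  -- uniqueness via coercivity
  have hkey' : ∀ w : W, B (e.symm (u', p')) w = F w := by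
    intro w
    rw [hB, hB₀, hF]
    simp only [LinearEquiv.apply_symm_apply]
    have := h1' (e w).1
    have := h2' (e w).2
    simp only at *
    linarith
  have hdiff : ∀ w : W, B (e.symm (u', p') - sol) w = 0 := by
    intro w
    have := hkey w
    have := hkey' w
    simp only [map_sub, ContinuousLinearMap.sub_apply]
    linarith
  have hz : e.symm (u', p') - sol = 0 := by
    obtain ⟨K, hK, hKc⟩ := coer
    have h0 := hKc (e.symm (u', p') - sol)
    rw [hdiff _] at h0
    have : ‖e.symm (u', p') - sol‖ = 0 := by
      by_contra hne
      have hpos : 0 < ‖e.symm (u', p') - sol‖ :=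
        lt_of_le_of_ne (norm_nonneg _) (Ne.symm hne)
      nlinarith [mul_pos (mul_pos hK hpos) hpos]
    exact norm_eq_zero.mp this
  have : e.symm (u', p') = sol := by
    have := sub_eq_zero.mp hz; exact this
  have : (u', p') = e sol := by
    rw [← this]; simp
  rw [this]
end

section
/- Let (a^{αβ}) be a symmetric positive definite 2×2 matrix with entries bounded and with determinant bounded below by a positive constant, and let μ > 0, λ ≥ 0. Then the fourth-order elastic tensor a^{αβγδ} = μ(a^{αγ}a^{βδ} + a^{βγ}a^{αδ}) + (2μλ/(2μ+λ))a^{αβ}a^{γδ} is positive definite on symmetric 2×2 tensors: there exists C > 0 such that Σ_{α,β} γ_{αβ}² ≤ C a^{αβγδ}γ_{αβ}γ_{γδ} for every symmetric tensor γ, and it is bounded: a^{αβγδ}γ_{αβ}ρ_{γδ} ≤ C (Σγ_{αβ}²)^{1/2}(Σρ_{αβ}²)^{1/2}. -/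
/-- The elastic tensor `a^{αβγδ} = μ(a^{αγ}a^{βδ} + a^{βγ}a^{αδ}) + (2μλ/(2μ+λ))a^{αβ}a^{γδ}`. -/
noncomputable def elasticTensor (a : Matrix (Fin 2) (Fin 2) ℝ) (μ lam : ℝ) :
    Fin 2 → Fin 2 → Fin 2 → Fin 2 → ℝ :=
  fun α β γ δ => μ * (a α γ * a β δ + a β γ * a α δ) + 2 * μ * lam / (2 * μ + lam) * (a α β * a γ δ)

/-- Key algebraic inequality: `(p+s)² tr(agag) ≥ det(a)² ‖g‖²`, via the identity
`(p+s)² tr(agag) - det(a)² ‖g‖² = ‖aga‖² + 2 det(a) ‖ag‖²`. -/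
private lemma key_ineq (p q s x y z : ℝ) (hd : 0 ≤ p*s - q^2) :
    (p*s-q^2)^2*(x^2+2*y^2+z^2) ≤
      (p+s)^2*((p*x+2*q*y+s*z)^2 - 2*(p*s-q^2)*(x*z-y^2)) := by
  nlinarith [sq_nonneg (p^2*x+2*p*q*y+q^2*z), sq_nonneg (p*q*x+(q^2+p*s)*y+q*s*z),
    sq_nonneg (q^2*x+2*q*s*y+s^2*z),
    mul_nonneg hd (sq_nonneg (p*x+q*y)), mul_nonneg hd (sq_nonneg (p*y+q*z)),
    mul_nonneg hd (sq_nonneg (q*x+s*y)), mul_nonneg hd (sq_nonneg (q*y+s*z))]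

/-- The ℓ¹ norm of a 2×2 matrix is at most twice its Frobenius norm. -/
private lemma abs_sum_le (h : Matrix (Fin 2) (Fin 2) ℝ) :
    (∑ α : Fin 2, ∑ β : Fin 2, |h α β|) ≤
      2 * Real.sqrt (∑ α : Fin 2, ∑ β : Fin 2, (h α β) ^ 2) := by
  have hnn : (0:ℝ) ≤ ∑ α : Fin 2, ∑ β : Fin 2, |h α β| := by positivity
  have h1 : (∑ α : Fin 2, ∑ β : Fin 2, |h α β|)^2 ≤
      4 * ∑ α : Fin 2, ∑ β : Fin 2, (h α β) ^ 2 := by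
    simp only [Fin.sum_univ_two]
    nlinarith [sq_abs (h 0 0), sq_abs (h 0 1), sq_abs (h 1 0), sq_abs (h 1 1),
      sq_nonneg (|h 0 0| - |h 1 1|), sq_nonneg (|h 0 0| - |h 0 1|), sq_nonneg (|h 0 0| - |h 1 0|),
      sq_nonneg (|h 0 1| - |h 1 0|), sq_nonneg (|h 0 1| - |h 1 1|), sq_nonneg (|h 1 0| - |h 1 1|)]
  calc (∑ α : Fin 2, ∑ β : Fin 2, |h α β|)
      = Real.sqrt ((∑ α : Fin 2, ∑ β : Fin 2, |h α β|)^2) := (Real.sqrt_sq hnn).symm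
    _ ≤ Real.sqrt (4 * ∑ α : Fin 2, ∑ β : Fin 2, (h α β) ^ 2) := Real.sqrt_le_sqrt h1
    _ = 2 * Real.sqrt (∑ α : Fin 2, ∑ β : Fin 2, (h α β) ^ 2) := by
        rw [show (4:ℝ) * (∑ α : Fin 2, ∑ β : Fin 2, (h α β) ^ 2)
            = 2^2 * (∑ α : Fin 2, ∑ β : Fin 2, (h α β) ^ 2) by ring,
          Real.sqrt_mul (by positivity), Real.sqrt_sq (by norm_num)]


private lemma part1_abstract (Λ m μ c p q s x y z C : ℝ) (hΛ : 0 < Λ) (hm : 0 < m)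
    (hμ : 0 < μ) (hc0 : 0 ≤ c) (hC1 : 2*Λ^2 ≤ C * (μ*m^2)) (hCpos : 0 < C)
    (hdet : m ≤ p*s - q^2) (hp : |p| ≤ Λ) (hs : |s| ≤ Λ) :
    x^2+2*y^2+z^2 ≤
      C * (2*μ*((p*x+2*q*y+s*z)^2 - 2*(p*s-q^2)*(x*z-y^2)) + c*(p*x+2*q*y+s*z)^2) := by
  have hd0 : (0:ℝ) ≤ p*s - q^2 := le_trans hm.le hdet
  have hkey := key_ineq p q s x y z hd0
  set T := (p*x+2*q*y+s*z)^2 - 2*(p*s-q^2)*(x*z-y^2) with hT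
  set S := p*x+2*q*y+s*z with hS
  have hμm : (0:ℝ) < μ * m^2 := by positivity
  have hps : 0 < (p+s)^2 := by
    nlinarith [sq_nonneg (p-s), sq_nonneg q, hdet, hm]
  have hT0 : 0 ≤ T := by
    have h9 : (0:ℝ) ≤ (p+s)^2 * T := le_trans (by positivity) hkey
    nlinarith [h9, hps]
  have hps4 : (p+s)^2 ≤ 4*Λ^2 := by
    nlinarith [abs_le.1 hp, abs_le.1 hs]
  have hTN : m^2 * (x^2+2*y^2+z^2) ≤ 4*Λ^2 * T := by
    have h5 : (p+s)^2 * T ≤ 4*Λ^2 * T := mul_le_mul_of_nonneg_right hps4 hT0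
    have h6 : (0:ℝ) ≤ ((p*s-q^2)^2 - m^2) * (x^2+2*y^2+z^2) := by
      apply mul_nonneg _ (by positivity)
      nlinarith [hdet, hm]
    linarith [hkey, h5, h6]
  have h10 : (μ*m^2) * (x^2+2*y^2+z^2) ≤ (μ*m^2) * (C*(2*μ*T + c*S^2)) := by
    linarith [mul_le_mul_of_nonneg_left hTN hμ.le,
      mul_nonneg (sub_nonneg.2 hC1)
        (mul_nonneg (mul_nonneg (by norm_num : (0:ℝ) ≤ 2) hμ.le) hT0),
      mul_nonneg (mul_nonneg (mul_nonneg hμm.le hCpos.le) hc0) (sq_nonneg S)]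
  exact le_of_mul_le_mul_left h10 hμm

/-- Uniform positive definiteness and boundedness of the elastic tensor: for symmetric
positive definite `(a^{αβ})` with entries bounded by `Λ` and determinant bounded below by
`m > 0`, there is `C > 0` (depending only on `Λ, m, μ, λ`) such that for all symmetric 2×2
tensors `γ`, `ρ`: `Σ γ_{αβ}² ≤ C a^{αβγδ}γ_{αβ}γ_{γδ}` and
`a^{αβγδ}γ_{αβ}ρ_{γδ} ≤ C (Σγ²)^{1/2}(Σρ²)^{1/2}`. -/
theorem elasticTensor_posDef_and_bounded
    (Λ m μ lam : ℝ) (hΛ : 0 < Λ) (hm : 0 < m) (hμ : 0 < μ) (hlam : 0 ≤ lam) :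
    ∃ C : ℝ, 0 < C ∧
      ∀ a : Matrix (Fin 2) (Fin 2) ℝ, a.IsSymm → a.PosDef →
        (∀ α β, |a α β| ≤ Λ) → m ≤ a.det →
        ∀ g r : Matrix (Fin 2) (Fin 2) ℝ, g.IsSymm → r.IsSymm →
          ((∑ α : Fin 2, ∑ β : Fin 2, (g α β) ^ 2) ≤
            C * ∑ α : Fin 2, ∑ β : Fin 2, ∑ γ : Fin 2, ∑ δ : Fin 2,
              elasticTensor a μ lam α β γ δ * g α β * g γ δ) ∧
          ((∑ α : Fin 2, ∑ β : Fin 2, ∑ γ : Fin 2, ∑ δ : Fin 2,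
              elasticTensor a μ lam α β γ δ * g α β * r γ δ) ≤
            C * Real.sqrt (∑ α : Fin 2, ∑ β : Fin 2, (g α β) ^ 2)
              * Real.sqrt (∑ α : Fin 2, ∑ β : Fin 2, (r α β) ^ 2)) := by
  have hden : (0:ℝ) < 2 * μ + lam := by linarith
  have hc0 : 0 ≤ 2 * μ * lam / (2 * μ + lam) := by positivity
  have hc2 : 2 * μ * lam / (2 * μ + lam) ≤ 2 * μ := by
    rw [div_le_iff₀ hden]; nlinarith
  refine ⟨2*Λ^2/(μ*m^2) + 16*μ*Λ^2, by positivity, ?_⟩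
  intro a hasymm hapos haΛ hadet g r hg hr
  set C : ℝ := 2*Λ^2/(μ*m^2) + 16*μ*Λ^2 with hCdef
  have hCpos : 0 < C := by rw [hCdef]; positivity
  have hμm : (0:ℝ) < μ * m^2 := by positivity
  have hC1 : 2*Λ^2 ≤ C * (μ*m^2) := by
    have h1 : C * (μ*m^2) = 2*Λ^2 + (16*μ*Λ^2)*(μ*m^2) := by
      rw [hCdef, add_mul, div_mul_cancel₀ _ (ne_of_gt hμm)]
    have h2 : (0:ℝ) ≤ (16*μ*Λ^2)*(μ*m^2) := by positivity
    linarith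
  have hC2 : 16*μ*Λ^2 ≤ C := by
    have h3 : (0:ℝ) < 2*Λ^2/(μ*m^2) := by positivity
    rw [hCdef]; linarith
  have ha10 : a 1 0 = a 0 1 := hasymm.apply 0 1
  have hg10 : g 1 0 = g 0 1 := hg.apply 0 1
  have hr10 : r 1 0 = r 0 1 := hr.apply 0 1
  have hdet : m ≤ a 0 0 * a 1 1 - (a 0 1)^2 := by
    have h4 := Matrix.det_fin_two a
    rw [ha10] at h4
    rw [h4] at hadet; nlinarith [hadet]
  have hd0 : (0:ℝ) ≤ a 0 0 * a 1 1 - (a 0 1)^2 := le_trans hm.le hdet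
  -- entrywise bound on the elastic tensor
  have hA : ∀ α β γ δ, |elasticTensor a μ lam α β γ δ| ≤ 4*μ*Λ^2 := by
    intro α β γ δ
    have hab : ∀ i j k l : Fin 2, |a i j * a k l| ≤ Λ^2 := by
      intro i j k l
      rw [abs_mul, sq]
      exact mul_le_mul (haΛ i j) (haΛ k l) (abs_nonneg _) hΛ.le
    have h1 : |μ * (a α γ * a β δ + a β γ * a α δ)| ≤ μ * (2*Λ^2) := by
      rw [abs_mul, abs_of_pos hμ]
      nlinarith [abs_add_le (a α γ * a β δ) (a β γ * a α δ), hab α γ β δ, hab β γ α δ,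
        abs_nonneg (a α γ * a β δ + a β γ * a α δ)]
    have h2 : |2 * μ * lam / (2 * μ + lam) * (a α β * a γ δ)| ≤ (2*μ) * Λ^2 := by
      rw [abs_mul, abs_of_nonneg hc0]
      nlinarith [hab α β γ δ, abs_nonneg (a α β * a γ δ)]
    calc |elasticTensor a μ lam α β γ δ|
        ≤ |μ * (a α γ * a β δ + a β γ * a α δ)| + |2 * μ * lam / (2 * μ + lam) * (a α β * a γ δ)| := by
          rw [elasticTensor]; exact abs_add_le _ _
      _ ≤ μ * (2*Λ^2) + (2*μ) * Λ^2 := add_le_add h1 h2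
      _ = 4*μ*Λ^2 := by ring
  constructor
  · -- positive definiteness
    have hsum : (∑ α : Fin 2, ∑ β : Fin 2, ∑ γ : Fin 2, ∑ δ : Fin 2,
          elasticTensor a μ lam α β γ δ * g α β * g γ δ)
        = 2*μ*((a 0 0 * g 0 0 + 2 * (a 0 1) * g 0 1 + a 1 1 * g 1 1)^2
            - 2*(a 0 0 * a 1 1 - (a 0 1)^2)*(g 0 0 * g 1 1 - (g 0 1)^2))
          + 2 * μ * lam / (2 * μ + lam)
            * (a 0 0 * g 0 0 + 2 * (a 0 1) * g 0 1 + a 1 1 * g 1 1)^2 := by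
      simp only [Fin.sum_univ_two, elasticTensor, ha10, hg10]
      ring
    rw [hsum]
    have hN : (∑ α : Fin 2, ∑ β : Fin 2, (g α β) ^ 2)
        = (g 0 0)^2 + 2*(g 0 1)^2 + (g 1 1)^2 := by
      simp only [Fin.sum_univ_two, hg10]; ring
    rw [hN]
    exact part1_abstract Λ m μ _ (a 0 0) (a 0 1) (a 1 1) (g 0 0) (g 0 1) (g 1 1) C
      hΛ hm hμ hc0 hC1 hCpos hdet (haΛ 0 0) (haΛ 1 1)
  · -- boundedness
    have step1 : (∑ α : Fin 2, ∑ β : Fin 2, ∑ γ : Fin 2, ∑ δ : Fin 2,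
          elasticTensor a μ lam α β γ δ * g α β * r γ δ)
        ≤ 4*μ*Λ^2 * ((∑ α : Fin 2, ∑ β : Fin 2, |g α β|) * (∑ γ : Fin 2, ∑ δ : Fin 2, |r γ δ|)) := by
      have hterm : ∀ α β γ δ : Fin 2, elasticTensor a μ lam α β γ δ * g α β * r γ δ
          ≤ 4*μ*Λ^2 * (|g α β| * |r γ δ|) := by
        intro α β γ δ
        calc elasticTensor a μ lam α β γ δ * g α β * r γ δ
            ≤ |elasticTensor a μ lam α β γ δ * g α β * r γ δ| := le_abs_self _
          _ = |elasticTensor a μ lam α β γ δ| * |g α β| * |r γ δ| := by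
              rw [abs_mul, abs_mul]
          _ ≤ 4*μ*Λ^2 * (|g α β| * |r γ δ|) := by
              rw [mul_assoc]
              exact mul_le_mul_of_nonneg_right (hA α β γ δ)
                (mul_nonneg (abs_nonneg _) (abs_nonneg _))
      calc (∑ α : Fin 2, ∑ β : Fin 2, ∑ γ : Fin 2, ∑ δ : Fin 2,
            elasticTensor a μ lam α β γ δ * g α β * r γ δ)
          ≤ ∑ α : Fin 2, ∑ β : Fin 2, ∑ γ : Fin 2, ∑ δ : Fin 2,
            4*μ*Λ^2 * (|g α β| * |r γ δ|) := by
            refine Finset.sum_le_sum fun α _ => Finset.sum_le_sum fun β _ =>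
              Finset.sum_le_sum fun γ _ => Finset.sum_le_sum fun δ _ => hterm α β γ δ
        _ = 4*μ*Λ^2 * ((∑ α : Fin 2, ∑ β : Fin 2, |g α β|) * (∑ γ : Fin 2, ∑ δ : Fin 2, |r γ δ|)) := by
            simp only [Fin.sum_univ_two]; ring
    have hg2 := abs_sum_le g
    have hr2 := abs_sum_le r
    have hrnn : (0:ℝ) ≤ ∑ α : Fin 2, ∑ β : Fin 2, |r α β| := by positivity
    have hsg : (0:ℝ) ≤ Real.sqrt (∑ α : Fin 2, ∑ β : Fin 2, (g α β) ^ 2) := Real.sqrt_nonneg _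
    have hsr : (0:ℝ) ≤ Real.sqrt (∑ α : Fin 2, ∑ β : Fin 2, (r α β) ^ 2) := Real.sqrt_nonneg _
    calc (∑ α : Fin 2, ∑ β : Fin 2, ∑ γ : Fin 2, ∑ δ : Fin 2,
          elasticTensor a μ lam α β γ δ * g α β * r γ δ)
        ≤ 4*μ*Λ^2 * ((∑ α : Fin 2, ∑ β : Fin 2, |g α β|) * (∑ γ : Fin 2, ∑ δ : Fin 2, |r γ δ|)) := step1
      _ ≤ 4*μ*Λ^2 * ((2 * Real.sqrt (∑ α : Fin 2, ∑ β : Fin 2, (g α β) ^ 2))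
            * (2 * Real.sqrt (∑ α : Fin 2, ∑ β : Fin 2, (r α β) ^ 2))) := by
          apply mul_le_mul_of_nonneg_left _ (by positivity)
          exact mul_le_mul hg2 hr2 hrnn (by positivity)
      _ = (16*μ*Λ^2) * Real.sqrt (∑ α : Fin 2, ∑ β : Fin 2, (g α β) ^ 2)
            * Real.sqrt (∑ α : Fin 2, ∑ β : Fin 2, (r α β) ^ 2) := by ring
      _ ≤ C * Real.sqrt (∑ α : Fin 2, ∑ β : Fin 2, (g α β) ^ 2)
            * Real.sqrt (∑ α : Fin 2, ∑ β : Fin 2, (r α β) ^ 2) := by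
          apply mul_le_mul_of_nonneg_right _ hsr
          exact mul_le_mul_of_nonneg_right hC2 hsg
end

section
/- (Peetre's lemma) Let X, Y, Z be Banach spaces, A : X → Y and B : X → Z bounded linear, B compact, with ‖x‖_X ≤ C(‖Ax‖_Y + ‖Bx‖_Z) for all x ∈ X, and A injective. Then there exists C' such that ‖x‖_X ≤ C'‖Ax‖_Y for all x ∈ X. -/
/-- Peetre's lemma: if `X, Y, Z` are Banach spaces, `A : X → Y` bounded linear and injective,
`B : X → Z` a compact operator, and `‖x‖ ≤ C(‖Ax‖ + ‖Bx‖)` for all `x`, then `A` is bounded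
below: there is `C'` with `‖x‖ ≤ C'‖Ax‖` for all `x`. -/
theorem peetre_lemma
    {X Y Z : Type*}
    [NormedAddCommGroup X] [NormedSpace ℝ X] [CompleteSpace X]
    [NormedAddCommGroup Y] [NormedSpace ℝ Y] [CompleteSpace Y]
    [NormedAddCommGroup Z] [NormedSpace ℝ Z] [CompleteSpace Z]
    (A : X →L[ℝ] Y) (B : X →L[ℝ] Z)
    (hA : Function.Injective A) (hB : IsCompactOperator B)
    (C : ℝ) (hbound : ∀ x : X, ‖x‖ ≤ C * (‖A x‖ + ‖B x‖)) :
    ∃ C' : ℝ, ∀ x : X, ‖x‖ ≤ C' * ‖A x‖ := by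
  by_contra h
  push_neg at h
  -- choose normalized sequence
  have hu : ∀ n : ℕ, ∃ u : X, ‖u‖ = 1 ∧ ‖A u‖ < 1 / (n + 1) := by
    intro n
    obtain ⟨x, hx⟩ := h (n + 1)
    have hx0 : x ≠ 0 := by
      intro h0; rw [h0] at hx; simp at hx
    refine ⟨‖x‖⁻¹ • x, ?_, ?_⟩
    · rw [norm_smul, norm_inv, norm_norm, inv_mul_cancel₀ (norm_ne_zero_iff.mpr hx0)]
    · rw [map_smul, norm_smul, norm_inv, norm_norm]
      rw [inv_mul_lt_iff₀ (norm_pos_iff.mpr hx0)]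
      have hn : (0:ℝ) < n + 1 := by positivity
      rw [mul_one_div, lt_div_iff₀ hn, mul_comm]
      exact hx
  choose u hu1 hu2 using hu
  -- A u n → 0
  have hAu : Filter.Tendsto (fun n => A (u n)) Filter.atTop (nhds 0) := by
    rw [tendsto_zero_iff_norm_tendsto_zero]
    have h0 : Filter.Tendsto (fun n : ℕ => 1 / ((n:ℝ) + 1)) Filter.atTop (nhds 0) :=
      tendsto_one_div_add_atTop_nhds_zero_nat
    exact squeeze_zero (fun n => norm_nonneg _) (fun n => (hu2 n).le) h0
  -- compactness: B (u n) has convergent subsequence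
  have hcpt : IsCompact (closure (B '' Metric.closedBall 0 1)) :=
    IsCompactOperator.isCompact_closure_image_closedBall (𝕜₁ := ℝ) (f := (B : X →ₗ[ℝ] Z)) hB 1
  have hmem : ∀ n, B (u n) ∈ closure (B '' Metric.closedBall 0 1) := by
    intro n
    exact subset_closure ⟨u n, by simp [hu1 n], rfl⟩
  obtain ⟨z, -, φ, hφ, hz⟩ := hcpt.tendsto_subseq hmem
  -- u ∘ φ is Cauchy
  have hAuφ : Filter.Tendsto (fun n => A (u (φ n))) Filter.atTop (nhds 0) :=
    hAu.comp hφ.tendsto_atTop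
  have hcauchy : CauchySeq (fun n => u (φ n)) := by
    have hAc : CauchySeq (fun n => A (u (φ n))) := hAuφ.cauchySeq
    have hBc : CauchySeq (fun n => B (u (φ n))) := hz.cauchySeq
    rw [Metric.cauchySeq_iff] at hAc hBc ⊢
    intro ε hε
    have hC : (0:ℝ) < max C 1 := lt_of_lt_of_le one_pos (le_max_right _ _)
    obtain ⟨N1, hN1⟩ := hAc (ε / (2 * max C 1)) (by positivity)
    obtain ⟨N2, hN2⟩ := hBc (ε / (2 * max C 1)) (by positivity)
    refine ⟨max N1 N2, fun m hm n hn => ?_⟩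
    have h1 := hN1 m (le_of_max_le_left hm) n (le_of_max_le_left hn)
    have h2 := hN2 m (le_of_max_le_right hm) n (le_of_max_le_right hn)
    rw [dist_eq_norm] at h1 h2 ⊢
    calc ‖u (φ m) - u (φ n)‖ ≤ C * (‖A (u (φ m) - u (φ n))‖ + ‖B (u (φ m) - u (φ n))‖) :=
          hbound _
      _ ≤ max C 1 * (‖A (u (φ m)) - A (u (φ n))‖ + ‖B (u (φ m)) - B (u (φ n))‖) := by
          rw [map_sub, map_sub]
          exact mul_le_mul_of_nonneg_right (le_max_left _ _)
            (by positivity)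
      _ < max C 1 * (ε / (2 * max C 1) + ε / (2 * max C 1)) := by
          apply mul_lt_mul_of_pos_left (add_lt_add h1 h2) hC
      _ = ε := by field_simp; ring
  obtain ⟨w, hw⟩ := cauchySeq_tendsto_of_complete hcauchy
  -- A w = 0
  have hAw : A w = 0 := by
    have := (A.continuous.tendsto w).comp hw
    exact tendsto_nhds_unique this hAuφ
  have hw0 : w = 0 := hA (by rw [hAw, map_zero])
  have hnw : Filter.Tendsto (fun n => ‖u (φ n)‖) Filter.atTop (nhds ‖w‖) :=
    (continuous_norm.tendsto w).comp hw
  have : Filter.Tendsto (fun n : ℕ => (1:ℝ)) Filter.atTop (nhds ‖w‖) := by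
    convert hnw using 2 with n; rw [hu1 (φ n)]
  have h1 : ‖w‖ = 1 := tendsto_nhds_unique this
    (tendsto_const_nhds : Filter.Tendsto (fun _ : ℕ => (1:ℝ)) Filter.atTop (nhds 1))
  rw [hw0, norm_zero] at h1
  norm_num at h1
end
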